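/- arXiv:1008.1464 — 3 statements merged into one kernel-verified Lean document; each statement's English description precedes it below -/
import Mathlib

section
/- Let (W,S) be a finite Coxeter system and let t be a reflection of W (i.e. t = w s w⁻¹ for some w ∈ W, s ∈ S). Then t can be written in the form t = y s y⁻¹ where y ∈ W and s ∈ S are such that ℓ(t) = 2·ℓ(y) + 1. -/
/-!
The parity of the number of occurrences of `x` in the right inversion sequence of a word `ω`
depends only on `π ω`: it is read off from the action of `π ω` in the representation of `W` on
`W × ZMod 2` in which `s i` acts by `(x, ε) ↦ (s i * x * s i, ε + [x = s i])`. For the palindromic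
word `ω ++ i :: ω.reverse` representing `t = π ω * s i * (π ω)⁻¹` this number is odd: `t` occurs
once in the middle and its other occurrences pair up. Hence `t` occurs in the right inversion
sequence of a reduced word for `t`, say at position `j`. It is then also the `j`-th entry of the
left inversion sequence, so `t = y * s i * y⁻¹` with `y` the product of the first `j` letters;
since also `t = y * s i * z` with `z` the product of the remaining letters, `z = y⁻¹` and
`ℓ t = j + 1 + ℓ z = 2 * j + 1`.
-/

theorem mul_mul_eq_iff_eq_inv_mul_mul_inv {G : Type*} [Group G] {a b c x : G} :
    a * x * b = c ↔ x = a⁻¹ * c * b⁻¹ := by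
  constructor <;> rintro rfl <;> group

namespace CoxeterSystem

variable {B W : Type*} [Group W] {M : CoxeterMatrix B} (cs : CoxeterSystem M W)

local prefix:100 "s " => cs.simple
local prefix:100 "π " => cs.wordProd
local prefix:100 "ℓ " => cs.length
local prefix:100 "ris " => cs.rightInvSeq
local prefix:100 "lis " => cs.leftInvSeq

theorem simple_mul_pow_simple_mul_simple (i j : B) (k : ℕ) :
    s j * (s i * s j) ^ k = (s j * s i) ^ k * s j :=
  SemiconjBy.pow_right (by simp [SemiconjBy, mul_assoc]) k

section ParityRepresentation

variable [DecidableEq W]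

def signPerm (i : B) : Equiv.Perm (W × ZMod 2) :=
  Function.Involutive.toPerm (fun q => (s i * q.1 * s i, q.2 + if q.1 = s i then 1 else 0)) <| by
    rintro ⟨x, ε⟩
    have hx : s i * x * s i = s i ↔ x = s i := by
      rw [mul_mul_eq_iff_eq_inv_mul_mul_inv, inv_simple, simple_mul_simple_self, one_mul]
    by_cases h : x = s i <;> simp [h, hx, ← mul_assoc, add_assoc, CharTwo.add_self_eq_zero]

theorem signPerm_apply (i : B) (x : W) (ε : ZMod 2) :
    cs.signPerm i (x, ε) = (s i * x * s i, ε + if x = s i then 1 else 0) :=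
  rfl

theorem signPerm_mul_signPerm_pow_apply (i j : B) (k : ℕ) (x : W) (ε : ZMod 2) :
    ((cs.signPerm i * cs.signPerm j) ^ k) (x, ε) =
      ((s i * s j) ^ k * x * (s j * s i) ^ k,
        ε + ∑ r ∈ Finset.range (2 * k), if x = (s j * s i) ^ r * s j then 1 else 0) := by
  induction k with
  | zero => simp
  | succ k ih =>
    have hinv : ((s i * s j) ^ k)⁻¹ = (s j * s i) ^ k := by simp [← inv_pow]
    have hinv' : ((s j * s i) ^ k)⁻¹ = (s i * s j) ^ k := by simp [← inv_pow]
    have hfirst : (s i * s j) ^ k * x * (s j * s i) ^ k = s j ↔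
        x = (s j * s i) ^ (2 * k) * s j := by
      rw [mul_mul_eq_iff_eq_inv_mul_mul_inv, hinv, hinv', mul_assoc,
        simple_mul_pow_simple_mul_simple, ← mul_assoc, ← pow_add, two_mul]
    have hsecond : s j * ((s i * s j) ^ k * x * (s j * s i) ^ k) * s j = s i ↔
        x = (s j * s i) ^ (2 * k + 1) * s j := by
      rw [show s j * ((s i * s j) ^ k * x * (s j * s i) ^ k) * s j =
          (s j * (s i * s j) ^ k) * x * ((s j * s i) ^ k * s j) by simp only [mul_assoc],
        mul_mul_eq_iff_eq_inv_mul_mul_inv, mul_inv_rev, mul_inv_rev, hinv, hinv', inv_simple,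
        simple_mul_pow_simple_mul_simple, mul_assoc _ (s j) (s i), ← mul_assoc, ← pow_succ,
        mul_assoc, ← mul_assoc, ← pow_add, add_right_comm, ← two_mul]
    rw [pow_succ', Equiv.Perm.mul_apply, ih, Equiv.Perm.mul_apply, signPerm_apply,
      signPerm_apply]
    simp only [hfirst, hsecond]
    rw [Nat.mul_succ, Finset.sum_range_succ, Finset.sum_range_succ]
    refine Prod.ext ?_ ?_
    · rw [pow_succ' (s i * s j) k, pow_succ (s j * s i) k]
      simp only [mul_assoc]
    · simp only [add_assoc]

theorem isLiftable_signPerm : M.IsLiftable cs.signPerm := by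
  intro i j
  ext ⟨x, ε⟩ : 1
  have hp : (s i * s j) ^ M i j = 1 := cs.simple_mul_simple_pow i j
  have hq : (s j * s i) ^ M i j = 1 := by
    rw [M.symmetric i j]
    exact cs.simple_mul_simple_pow j i
  have hsum : ∑ r ∈ Finset.range (2 * M i j),
      (if x = (s j * s i) ^ r * s j then 1 else 0 : ZMod 2) = 0 := by
    -- the summands are `M i j`-periodic in `r`, so the sum counts every term twice
    simp only [two_mul, Finset.sum_range_add, pow_add, hq, one_mul, CharTwo.add_self_eq_zero]
  rw [signPerm_mul_signPerm_pow_apply, hp, hq, hsum]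
  simp

def parityRep : W →* Equiv.Perm (W × ZMod 2) :=
  cs.lift ⟨cs.signPerm, cs.isLiftable_signPerm⟩

theorem parityRep_wordProd_apply (ω : List B) (x : W) (ε : ZMod 2) :
    cs.parityRep (π ω) (x, ε) = (π ω * x * (π ω)⁻¹, ε + (ris ω).count x) := by
  induction ω with
  | nil => simp
  | cons i ω ih =>
    have hcond : π ω * (x * (π ω)⁻¹) = s i ↔ (π ω)⁻¹ * (s i * π ω) = x := by
      rw [← mul_assoc, mul_mul_eq_iff_eq_inv_mul_mul_inv, inv_inv, eq_comm, mul_assoc]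
    rw [wordProd_cons, map_mul, Equiv.Perm.mul_apply, ih, parityRep, lift_apply_simple,
      signPerm_apply]
    simp only [hcond, rightInvSeq, List.count_cons, beq_iff_eq, mul_inv_rev, inv_simple,
      mul_assoc, Nat.cast_add, Nat.cast_ite, Nat.cast_one, Nat.cast_zero, add_assoc]

theorem odd_count_rightInvSeq_iff_of_wordProd_eq {ω ω' : List B} (h : π ω = π ω') (x : W) :
    Odd ((ris ω).count x) ↔ Odd ((ris ω').count x) := by
  have := congrArg Prod.snd (cs.parityRep_wordProd_apply ω x 0)
  rw [h, parityRep_wordProd_apply] at this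
  simp only [zero_add] at this
  rw [← ZMod.natCast_eq_one_iff_odd, ← ZMod.natCast_eq_one_iff_odd, this]

end ParityRepresentation

theorem rightInvSeq_append (ω ω' : List B) :
    ris (ω ++ ω') = (ris ω).map (MulAut.conj (π ω')⁻¹) ++ ris ω' := by
  induction ω with
  | nil => simp
  | cons i ω ih =>
    simp only [List.cons_append, rightInvSeq, ih, List.map_cons, wordProd_append,
      MulAut.conj_apply, inv_inv, mul_inv_rev, mul_assoc]

theorem map_conj_rightInvSeq (ω : List B) : (ris ω).map (MulAut.conj (π ω)) = lis ω := by
  induction ω with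
  | nil => simp
  | cons i ω ih =>
    simp only [rightInvSeq, leftInvSeq, List.map_cons, wordProd_cons, ← ih, List.map_map]
    rw [List.cons.injEq]
    exact ⟨by simp [mul_assoc], by rw [map_mul]; rfl⟩

theorem count_rightInvSeq_append_cons_reverse [DecidableEq W] (ω : List B) (i : B) :
    (ris (ω ++ i :: ω.reverse)).count (π ω * s i * (π ω)⁻¹) =
      2 * (lis ω).count (π ω * s i * (π ω)⁻¹) + 1 := by
  set t := π ω * s i * (π ω)⁻¹
  have hconj :
      (ris ω).map (MulAut.conj (π (i :: ω.reverse))⁻¹) = (lis ω).map (MulAut.conj t) := by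
    have : (π (i :: ω.reverse))⁻¹ = t * π ω := by simp [t, wordProd_cons, mul_assoc]
    rw [this, map_mul, ← map_conj_rightInvSeq, List.map_map]
    rfl
  have hmid : (π ω.reverse)⁻¹ * s i * π ω.reverse = t := by simp [t]
  rw [rightInvSeq_append, hconj, rightInvSeq, hmid, rightInvSeq_reverse, List.count_append,
    List.count_cons_self, List.count_reverse]
  have hfix : MulAut.conj t t = t := by simp
  nth_rw 1 [← hfix]
  rw [List.count_map_of_injective _ _ (MulAut.conj t).injective]
  ring

theorem odd_count_rightInvSeq_of_isReflection [DecidableEq W] {ω : List B}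
    (ht : cs.IsReflection (π ω)) : Odd ((ris ω).count (π ω)) := by
  obtain ⟨w, i, ht⟩ := ht
  obtain ⟨ω', rfl⟩ := cs.wordProd_surjective w
  have hpal : π ω = π (ω' ++ i :: ω'.reverse) := by
    rw [ht, wordProd_append, wordProd_cons, wordProd_reverse, mul_assoc]
  rw [cs.odd_count_rightInvSeq_iff_of_wordProd_eq hpal, ht,
    count_rightInvSeq_append_cons_reverse]
  exact odd_two_mul_add_one _

theorem exists_eq_conj_simple_and_length_eq_of_wordProd_mem_rightInvSeq {ω : List B}
    (hω : cs.IsReduced ω) (h : π ω ∈ ris ω) :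
    ∃ (y : W) (i : B), π ω = y * s i * y⁻¹ ∧ ℓ (π ω) = 2 * ℓ y + 1 := by
  obtain ⟨j, hjr, hjω⟩ := List.mem_iff_getElem.mp h
  have hj : j < ω.length := by simpa using hjr
  set y := π (ω.take j)
  set z := π (ω.drop (j + 1))
  have hleft : (lis ω)[j]'(by simpa using hj) = π ω := by
    have := (cs.wordProd_mul_getD_rightInvSeq ω j).trans
      (cs.getD_leftInvSeq_mul_wordProd ω j).symm
    rwa [List.getD_eq_getElem _ _ hjr, List.getD_eq_getElem _ _ (by simpa using hj), hjω,
      mul_left_inj, eq_comm] at this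
  have hconj : π ω = y * s ω[j] * y⁻¹ := by rw [← hleft, getElem_leftInvSeq]
  have hsplit : π ω = y * s ω[j] * z := by
    rw [mul_assoc, ← wordProd_cons, List.getElem_cons_drop hj, ← wordProd_append,
      List.take_append_drop]
  have hz : z = y⁻¹ := mul_left_cancel (hsplit.symm.trans hconj)
  have hy : ℓ y = j := by rw [(hω.take j).eq, List.length_take]; omega
  have hzlen : ℓ z = ω.length - (j + 1) := by rw [(hω.drop (j + 1)).eq, List.length_drop]
  rw [hz, length_inv, hy] at hzlen
  exact ⟨y, ω[j], hconj, by rw [hω.eq]; omega⟩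

end CoxeterSystem

theorem reflection_eq_conj_simple_with_length_general {B W : Type*} [Group W]
    {M : CoxeterMatrix B} (cs : CoxeterSystem M W) {t : W} (ht : cs.IsReflection t) :
    ∃ (y : W) (i : B), t = y * cs.simple i * y⁻¹ ∧
      cs.length t = 2 * cs.length y + 1 := by
  classical
  obtain ⟨ω, hω, rfl⟩ := cs.exists_isReduced t
  exact cs.exists_eq_conj_simple_and_length_eq_of_wordProd_mem_rightInvSeq hω
    (List.count_pos_iff.mp (cs.odd_count_rightInvSeq_of_isReflection ht).pos)

/-- Let `(W, S)` be a finite Coxeter system and let `t` be a reflection of `W`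
(i.e. `t = w * s * w⁻¹` for some `w ∈ W`, `s ∈ S`).  Then `t` can be written in the form
`t = y * s * y⁻¹` where `y ∈ W` and `s ∈ S` are such that `ℓ(t) = 2 * ℓ(y) + 1`. -/
theorem reflection_eq_conj_simple_with_length {B W : Type*} [Group W] [Finite W]
    {M : CoxeterMatrix B} (cs : CoxeterSystem M W) {t : W} (ht : cs.IsReflection t) :
    ∃ (y : W) (i : B), t = y * cs.simple i * y⁻¹ ∧
      cs.length t = 2 * cs.length y + 1 :=
  reflection_eq_conj_simple_with_length_general cs ht
end

section
/- Let (W,S) be a finite Coxeter system. The map sending a conjugacy class C of W to the ∼-equivalence class of the pairs (J(w), conjugacy class of w in W_{J(w)}) for w ∈ C_min is a well-defined bijection from the set of conjugacy classes of W onto the set 𝓘(W,S)/∼ of equivalence classes of pairs. -/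
/-!
Send a cuspidal pair `(I, C')` to the `W`-conjugacy class containing `C'`. This respects `∼`
and sends the pair of `w` to the class of `w`, so it suffices to show that it is a bijection
on `𝓘(W,S)/∼`.

It is onto: if `K` is a set of generators of least (finite) size such that `W_K` meets the class
of `w`, the `W_K`-class of such an element is cuspidal.

It is injective: if `(I₁, C₁')` and `(I₂, C₂')` have `W`-conjugate elements, take `d` of least
length with `d C₁' d⁻¹ ∩ C₂' ≠ ∅`. It is the shortest element of `W_{I₂} d W_{I₁}`, so by
Kilmoyer's theorem an element `u ∈ C₁'` with `d u d⁻¹ ∈ W_{I₂}` lies in the standard parabolic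
subgroup on `{i ∈ I₁ | d sᵢ d⁻¹ ∈ S_{I₂}}`. Cuspidality forces this set to be `I₁`; by symmetry
in `d⁻¹`, `d S_{I₁} d⁻¹ = S_{I₂}`.

The Coxeter-theoretic input is the strong exchange condition. It comes from the action of `W`
on `W × ZMod 2` in which `s` acts by `(u, e) ↦ (s u s, e + [u = s])`: the parity of the number
of occurrences of `t` in the right inversion sequence of a word depends only on its product.
-/

/-- The standard parabolic subgroup `W_I` of a Coxeter system. -/
def CoxeterSystem.parabolic {B W : Type*} [Group W] {M : CoxeterMatrix B}
    (cs : CoxeterSystem M W) (I : Set B) : Subgroup W :=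
  Subgroup.closure (cs.simple '' I)

/-- `C` is a conjugacy class of `W`. -/
def IsConjClassSet {W : Type*} [Group W] (C : Set W) : Prop :=
  ∃ w : W, C = {x | IsConj w x}

/-- The set of elements of minimal length in `C`. -/
def CoxeterSystem.Cmin {B W : Type*} [Group W] {M : CoxeterMatrix B}
    (cs : CoxeterSystem M W) (C : Set W) : Set W :=
  {w ∈ C | ∀ x ∈ C, cs.length w ≤ cs.length x}

/-- `J(w)`: the set of generators occurring in some (equivalently, any) reduced
expression of `w`. -/
def CoxeterSystem.Jset {B W : Type*} [Group W] {M : CoxeterMatrix B}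
    (cs : CoxeterSystem M W) (w : W) : Set B :=
  {i | ∃ ω : List B, cs.IsReduced ω ∧ cs.wordProd ω = w ∧ i ∈ ω}

/-- The conjugacy class of `w` under conjugation by a subgroup `H` (as a subset of `W`). -/
def conjClassIn {W : Type*} [Group W] (H : Subgroup W) (w : W) : Set W :=
  {x | ∃ y ∈ H, y * w * y⁻¹ = x}

/-- `(I, C')` belongs to `𝓘(W,S)`: `C'` is a conjugacy class of `W_I` which is cuspidal in
`W_I`. -/
def CoxeterSystem.IsCuspidalPair {B W : Type*} [Group W] {M : CoxeterMatrix B}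
    (cs : CoxeterSystem M W) (I : Set B) (C' : Set W) : Prop :=
  (∃ w ∈ cs.parabolic I, C' = conjClassIn (cs.parabolic I) w) ∧
  ∀ K : Set B, K ⊂ I → ∀ x ∈ C', x ∉ cs.parabolic K

/-- The equivalence `∼` on pairs: `(I₁,C₁') ∼ (I₂,C₂')` iff there is `x ∈ W` with
`I₂ = x I₁ x⁻¹` (as sets of simple reflections) and `C₂' = x C₁' x⁻¹`. -/
def CoxeterSystem.PairEquiv {B W : Type*} [Group W] {M : CoxeterMatrix B}
    (cs : CoxeterSystem M W) (p q : Set B × Set W) : Prop :=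
  ∃ x : W, cs.simple '' q.1 = (fun g => x * g * x⁻¹) '' (cs.simple '' p.1) ∧
    q.2 = (fun g => x * g * x⁻¹) '' p.2

/-- The pair `π(w) = (J(w), conjugacy class of w in W_{J(w)})` attached to `w`. -/
def CoxeterSystem.minPair {B W : Type*} [Group W] {M : CoxeterMatrix B}
    (cs : CoxeterSystem M W) (w : W) : Set B × Set W :=
  (cs.Jset w, conjClassIn (cs.parabolic (cs.Jset w)) w)

/-- The set `𝓘(W,S)` of pairs `(I, C')` with `I ⊆ S` and `C'` a cuspidal conjugacy class of
`W_I`. -/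
def CoxeterSystem.CuspPair {B W : Type*} [Group W] {M : CoxeterMatrix B}
    (cs : CoxeterSystem M W) : Type _ :=
  {p : Set B × Set W // cs.IsCuspidalPair p.1 p.2}

section TwistedConj

variable {G : Type*} [Group G] [DecidableEq G]

def twistedConj (a : G) : Equiv.Perm (G × ZMod 2) where
  toFun x := (a * x.1 * a⁻¹, x.2 + if x.1 = a then 1 else 0)
  invFun x := (a⁻¹ * x.1 * a, x.2 + if x.1 = a then 1 else 0)
  left_inv := by
    rintro ⟨u, e⟩
    by_cases hu : u = a <;>
      simp [hu, mul_assoc, add_assoc, mul_inv_eq_one, CharTwo.add_self_eq_zero]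
  right_inv := by
    rintro ⟨u, e⟩
    by_cases hu : u = a <;>
      simp [hu, mul_assoc, add_assoc, inv_mul_eq_iff_eq_mul, CharTwo.add_self_eq_zero]

theorem twistedConj_apply (a u : G) (e : ZMod 2) :
    twistedConj a (u, e) = (a * u * a⁻¹, e + if u = a then 1 else 0) := rfl

theorem twistedConj_mul_pow_apply {a b : G} (ha : a⁻¹ = a) (hb : b⁻¹ = b) (u : G)
    (e : ZMod 2) (k : ℕ) :
    ((twistedConj a * twistedConj b) ^ k) (u, e) =
      (((b * a) ^ k)⁻¹ * u * (b * a) ^ k,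
        e + ∑ r ∈ Finset.range (2 * k), if u = (b * a) ^ r * b then 1 else 0) := by
  induction k with
  | zero => simp
  | succ k ih =>
    set q := b * a
    have hb_conj : b * (q ^ k)⁻¹ = q ^ k * b := by
      have : SemiconjBy b q⁻¹ q := by
        simp only [SemiconjBy, q, mul_inv_rev, ha, hb, mul_assoc]
      simpa [inv_pow] using (this.pow_right k).eq
    have h_even : q ^ k * b * (q ^ k)⁻¹ = q ^ (2 * k) * b := by
      rw [mul_assoc, hb_conj, ← mul_assoc, ← pow_add, two_mul]
    have h_odd : q ^ k * (b⁻¹ * a * b) * (q ^ k)⁻¹ = q ^ (2 * k + 1) * b := by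
      rw [hb, show b * a * b = q * b from rfl, ← mul_assoc, ← pow_succ, mul_assoc, hb_conj,
        ← mul_assoc, ← pow_add]
      ring_nf
    have h_cond_even : (q ^ k)⁻¹ * u * q ^ k = b ↔ u = q ^ (2 * k) * b := by
      rw [← h_even]
      constructor <;> intro h <;> [rw [← h]; rw [h]] <;> group
    have h_cond_odd : b * ((q ^ k)⁻¹ * u * q ^ k) * b⁻¹ = a ↔ u = q ^ (2 * k + 1) * b := by
      rw [← h_odd]
      constructor <;> intro h <;> [rw [← h]; rw [h]] <;> group
    rw [pow_succ', Equiv.Perm.mul_apply, Equiv.Perm.mul_apply, ih, twistedConj_apply,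
      twistedConj_apply, Prod.mk.injEq]
    constructor
    · simp only [q, pow_succ, mul_inv_rev, ha, hb]
      group
    · rw [if_congr h_cond_even rfl rfl, if_congr h_cond_odd rfl rfl,
        show 2 * (k + 1) = 2 * k + 1 + 1 by ring, Finset.sum_range_succ, Finset.sum_range_succ]
      ring

theorem twistedConj_mul_pow_eq_one {a b : G} (ha : a⁻¹ = a) (hb : b⁻¹ = b) {m : ℕ}
    (hm : (b * a) ^ m = 1) : (twistedConj a * twistedConj b) ^ m = 1 := by
  ext ⟨u, e⟩ <;> rw [twistedConj_mul_pow_apply ha hb, hm]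
  · simp
  · -- the reflections `(b * a) ^ r * b` repeat with period `m`, so each is counted twice
    have h_periodic : ∀ r, (b * a) ^ (m + r) = (b * a) ^ r := by simp [pow_add, hm]
    simp only [two_mul, Finset.sum_range_add, h_periodic, CharTwo.add_self_eq_zero, add_zero,
      Equiv.Perm.one_apply]

end TwistedConj

namespace CoxeterSystem

variable {B W : Type*} [Group W] {M : CoxeterMatrix B} (cs : CoxeterSystem M W)

section TwistedConjRep

variable [DecidableEq W]

theorem isLiftable_twistedConj_simple : M.IsLiftable (fun i => twistedConj (cs.simple i)) := by
  intro i i'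
  refine twistedConj_mul_pow_eq_one (cs.inv_simple i) (cs.inv_simple i') ?_
  rw [M.symmetric]
  exact cs.simple_mul_simple_pow i' i

def twistedConjRep : W →* Equiv.Perm (W × ZMod 2) :=
  cs.lift ⟨_, cs.isLiftable_twistedConj_simple⟩

theorem twistedConjRep_wordProd (ω : List B) (u : W) (e : ZMod 2) :
    cs.twistedConjRep (cs.wordProd ω) (u, e) =
      (cs.wordProd ω * u * (cs.wordProd ω)⁻¹, e + (cs.rightInvSeq ω).count u) := by
  induction ω generalizing u e with
  | nil => simp
  | cons i ω ih =>
    rw [cs.wordProd_cons, map_mul, Equiv.Perm.mul_apply, ih, twistedConjRep,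
      cs.lift_apply_simple, twistedConj_apply, Prod.mk.injEq]
    have h_cond : cs.wordProd ω * u * (cs.wordProd ω)⁻¹ = cs.simple i ↔
        (cs.wordProd ω)⁻¹ * cs.simple i * cs.wordProd ω = u := by
      constructor <;> intro h <;> [rw [← h]; rw [← h]] <;> group
    constructor
    · group
    · simp only [rightInvSeq, List.count_cons, beq_iff_eq, ← h_cond]
      push_cast
      ring

theorem exists_twistedConjRep_apply (w u : W) :
    ∃ c : ZMod 2, ∀ e, cs.twistedConjRep w (u, e) = (w * u * w⁻¹, e + c) := by
  obtain ⟨ω, rfl⟩ := cs.wordProd_surjective w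
  exact ⟨_, fun e => cs.twistedConjRep_wordProd ω u e⟩

theorem twistedConjRep_reflection_self {t : W} (ht : cs.IsReflection t) (e : ZMod 2) :
    cs.twistedConjRep t (t, e) = (t, e + 1) := by
  obtain ⟨z, i, rfl⟩ := ht
  obtain ⟨c, hc⟩ := cs.exists_twistedConjRep_apply z⁻¹ (z * cs.simple i * z⁻¹)
  obtain ⟨c', hc'⟩ := cs.exists_twistedConjRep_apply z (cs.simple i)
  have h_simple : z⁻¹ * (z * cs.simple i * z⁻¹) * z⁻¹⁻¹ = cs.simple i := by group
  have h_cancel : c + c' = 0 := by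
    have h : cs.twistedConjRep z (cs.twistedConjRep z⁻¹ (z * cs.simple i * z⁻¹, e)) =
        (z * cs.simple i * z⁻¹, e) := by
      rw [← Equiv.Perm.mul_apply, ← map_mul, mul_inv_cancel, map_one, Equiv.Perm.one_apply]
    rw [hc, h_simple, hc', Prod.mk.injEq] at h
    linear_combination h.2
  rw [map_mul, map_mul, Equiv.Perm.mul_apply, Equiv.Perm.mul_apply, hc, h_simple, twistedConjRep,
    cs.lift_apply_simple, twistedConj_apply, if_pos rfl, ← twistedConjRep, mul_inv_cancel_right,
    hc', Prod.mk.injEq]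
  exact ⟨rfl, by linear_combination h_cancel⟩

end TwistedConjRep

theorem mem_rightInvSeq_of_isRightInversion {ω : List B} {t : W}
    (ht : cs.IsRightInversion (cs.wordProd ω) t) : t ∈ cs.rightInvSeq ω := by
  classical
  by_contra h_not_mem
  -- then `t` would also be a right inversion of `w * t`
  obtain ⟨ν, hν_red, hν⟩ := cs.exists_isReduced (cs.wordProd ω * t)
  have h_odd : ((cs.rightInvSeq ν).count t : ZMod 2) = 1 := by
    have h := cs.twistedConjRep_wordProd ν t 0
    rw [← hν, map_mul, Equiv.Perm.mul_apply, cs.twistedConjRep_reflection_self ht.1,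
      cs.twistedConjRep_wordProd, List.count_eq_zero.mpr h_not_mem] at h
    simpa using (congrArg Prod.snd h).symm
  have h_mem : t ∈ cs.rightInvSeq ν := by
    by_contra h
    simp [List.count_eq_zero.mpr h] at h_odd
  have h_lt := (cs.isRightInversion_of_mem_rightInvSeq hν_red h_mem).2
  rw [← hν, mul_assoc, ht.1.mul_self, mul_one] at h_lt
  exact lt_asymm ht.2 h_lt

theorem strong_exchange {ω : List B} {t : W} (ht : cs.IsRightInversion (cs.wordProd ω) t) :
    ∃ j < ω.length, cs.wordProd ω * t = cs.wordProd (ω.eraseIdx j) := by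
  obtain ⟨j, hj, rfl⟩ := List.getElem_of_mem (cs.mem_rightInvSeq_of_isRightInversion ht)
  refine ⟨j, by simpa using hj, ?_⟩
  rw [← cs.wordProd_mul_getD_rightInvSeq, List.getD_eq_getElem]

theorem simple_mem_parabolic {I : Set B} {i : B} (hi : i ∈ I) :
    cs.simple i ∈ cs.parabolic I :=
  Subgroup.subset_closure ⟨i, hi, rfl⟩

theorem wordProd_mem_parabolic {I : Set B} {ω : List B} (hω : ∀ i ∈ ω, i ∈ I) :
    cs.wordProd ω ∈ cs.parabolic I :=
  list_prod_mem (by simpa using fun i hi => cs.simple_mem_parabolic (hω i hi))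

theorem parabolic_univ : cs.parabolic Set.univ = ⊤ := by
  rw [parabolic, Set.image_univ, cs.subgroup_closure_range_simple]

theorem exists_word_of_mem_parabolic {I : Set B} {w : W} (hw : w ∈ cs.parabolic I) :
    ∃ ω : List B, (∀ i ∈ ω, i ∈ I) ∧ cs.wordProd ω = w := by
  induction hw using Subgroup.closure_induction with
  | mem x hx =>
    obtain ⟨i, hi, rfl⟩ := hx
    exact ⟨[i], by simpa using hi, cs.wordProd_singleton i⟩
  | one => exact ⟨[], by simp, cs.wordProd_nil⟩
  | mul x y _ _ hx hy =>
    obtain ⟨α, hα, rfl⟩ := hx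
    obtain ⟨β, hβ, rfl⟩ := hy
    exact ⟨α ++ β, by simpa [or_imp, forall_and] using ⟨hα, hβ⟩, cs.wordProd_append α β⟩
  | inv x _ hx =>
    obtain ⟨α, hα, rfl⟩ := hx
    exact ⟨α.reverse, by simpa using hα, cs.wordProd_reverse α⟩

theorem length_wordProd_eraseIdx_lt {ω : List B} (hω : cs.IsReduced ω) {j : ℕ}
    (hj : j < ω.length) :
    cs.length (cs.wordProd (ω.eraseIdx j)) < cs.length (cs.wordProd ω) := by
  have := cs.length_wordProd_le (ω.eraseIdx j)
  have := List.length_eraseIdx_add_one hj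
  rw [hω.eq]
  omega

theorem exists_reduced_subword (ω : List B) :
    ∃ ω' : List B, cs.IsReduced ω' ∧ ω' ⊆ ω ∧ cs.wordProd ω' = cs.wordProd ω := by
  induction ω using List.reverseRecOn with
  | nil => exact ⟨[], by simp [IsReduced], List.Subset.refl _, rfl⟩
  | append_singleton ω i ih =>
    obtain ⟨ω', hω'_red, hω'_sub, hω'⟩ := ih
    have h_sub : ω' ⊆ ω ++ [i] := List.Subset.trans hω'_sub (List.subset_append_left _ _)
    rw [cs.wordProd_append, cs.wordProd_singleton, ← hω']
    rcases cs.length_mul_simple (cs.wordProd ω') i with h_up | h_down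
    · refine ⟨ω' ++ [i], ?_, List.append_subset.2 ⟨h_sub, by simp⟩,
        by simp [cs.wordProd_append]⟩
      rw [IsReduced, cs.wordProd_append, cs.wordProd_singleton, h_up, hω'_red.eq]
      simp
    · obtain ⟨j, hj, h_erase⟩ :=
        cs.strong_exchange (ω := ω') ⟨cs.isReflection_simple i, by omega⟩
      refine ⟨ω'.eraseIdx j, ?_, List.Subset.trans List.eraseIdx_subset h_sub, h_erase.symm⟩
      have := List.length_eraseIdx_add_one hj
      rw [IsReduced, ← h_erase]
      rw [hω'_red.eq] at h_down
      omega

theorem exists_reduced_word_of_mem_parabolic {I : Set B} {w : W} (hw : w ∈ cs.parabolic I) :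
    ∃ ω : List B, cs.IsReduced ω ∧ (∀ i ∈ ω, i ∈ I) ∧ cs.wordProd ω = w := by
  obtain ⟨ω, hω_I, rfl⟩ := cs.exists_word_of_mem_parabolic hw
  obtain ⟨ω', hω'_red, hω'_sub, hω'⟩ := cs.exists_reduced_subword ω
  exact ⟨ω', hω'_red, fun i hi => hω_I i (hω'_sub hi), hω'⟩

theorem exists_simple_eq_of_mem_parabolic {I : Set B} {w : W} (hw : w ∈ cs.parabolic I)
    (h_len : cs.length w = 1) : ∃ i ∈ I, w = cs.simple i := by
  obtain ⟨ω, hω_red, hω_I, rfl⟩ := cs.exists_reduced_word_of_mem_parabolic hw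
  obtain ⟨i, rfl⟩ := List.length_eq_one_iff.mp (hω_red.eq ▸ h_len)
  exact ⟨i, hω_I i (List.mem_singleton_self i), cs.wordProd_singleton i⟩

theorem parabolic_induction {I : Set B} {P : W → Prop} (one : P 1)
    (mul_simple : ∀ w ∈ cs.parabolic I, ∀ i ∈ I,
      cs.length (w * cs.simple i) = cs.length w + 1 → P w → P (w * cs.simple i))
    {w : W} (hw : w ∈ cs.parabolic I) : P w := by
  obtain ⟨ω, hω_red, hω_I, rfl⟩ := cs.exists_reduced_word_of_mem_parabolic hw
  clear hw
  induction ω using List.reverseRecOn with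
  | nil => exact one
  | append_singleton ω i ih =>
    have hω_red' : cs.IsReduced ω := by simpa using hω_red.take ω.length
    have h_len := hω_red.eq
    rw [cs.wordProd_append, cs.wordProd_singleton] at h_len ⊢
    refine mul_simple _ (cs.wordProd_mem_parabolic fun j hj => hω_I j (by simp [hj]))
      i (hω_I i (by simp)) ?_ (ih hω_red' fun j hj => hω_I j (by simp [hj]))
    rw [h_len, hω_red'.eq, List.length_append, List.length_singleton]

theorem exchange_mul {K L : Set B} {x y t : W} (hx : x ∈ cs.parabolic K)
    (hy : y ∈ cs.parabolic L) (ht : cs.IsRightInversion (x * y) t) :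
    (∃ x' ∈ cs.parabolic K, cs.length x' < cs.length x ∧ x * y * t = x' * y) ∨
      (∃ y' ∈ cs.parabolic L, cs.length y' < cs.length y ∧ x * y * t = x * y') := by
  obtain ⟨α, hα_red, hα_K, rfl⟩ := cs.exists_reduced_word_of_mem_parabolic hx
  obtain ⟨β, hβ_red, hβ_L, rfl⟩ := cs.exists_reduced_word_of_mem_parabolic hy
  rw [← cs.wordProd_append] at ht
  obtain ⟨j, hj, h_erase⟩ := cs.strong_exchange ht
  rw [List.length_append] at hj
  rcases lt_or_ge j α.length with hjα | hjα
  · rw [List.eraseIdx_append_of_lt_length hjα, cs.wordProd_append, cs.wordProd_append]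
      at h_erase
    exact Or.inl ⟨_, cs.wordProd_mem_parabolic fun i hi => hα_K i (List.mem_of_mem_eraseIdx hi),
      cs.length_wordProd_eraseIdx_lt hα_red hjα, h_erase⟩
  · rw [List.eraseIdx_append_of_length_le hjα, cs.wordProd_append, cs.wordProd_append]
      at h_erase
    exact Or.inr ⟨_, cs.wordProd_mem_parabolic fun i hi => hβ_L i (List.mem_of_mem_eraseIdx hi),
      cs.length_wordProd_eraseIdx_lt hβ_red (by omega), h_erase⟩

theorem length_mul_of_minimal {I : Set B} {d : W}
    (hd : ∀ b ∈ cs.parabolic I, cs.length d ≤ cs.length (d * b)) {b : W}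
    (hb : b ∈ cs.parabolic I) : cs.length (d * b) = cs.length d + cs.length b := by
  refine cs.parabolic_induction (P := fun b => cs.length (d * b) = cs.length d + cs.length b)
    (by simp) (fun w hw i hi h_up ih => ?_) hb
  rw [h_up, ← add_assoc, ← ih, ← mul_assoc]
  refine (cs.length_mul_simple (d * w) i).resolve_right fun h_down => ?_
  have h_inv : cs.IsRightInversion (d * w) (cs.simple i) :=
    ⟨cs.isReflection_simple i, by omega⟩
  rcases cs.exchange_mul (cs.parabolic_univ ▸ Subgroup.mem_top d) hw h_inv with
    ⟨x', -, hx'_lt, h_eq⟩ | ⟨y', -, hy'_lt, h_eq⟩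
  · have h_conj : w * cs.simple i * w⁻¹ ∈ cs.parabolic I :=
      mul_mem (mul_mem hw (cs.simple_mem_parabolic hi)) (inv_mem hw)
    have := hd _ h_conj
    rw [show d * (w * cs.simple i * w⁻¹) = x' by rw [← mul_assoc, ← mul_assoc, h_eq]; group]
      at this
    omega
  · rw [mul_assoc, mul_left_cancel_iff] at h_eq
    subst h_eq
    omega

def IsMinimalDoubleCosetRep (J I : Set B) (d : W) : Prop :=
  ∀ a ∈ cs.parabolic J, ∀ b ∈ cs.parabolic I, cs.length d ≤ cs.length (a * d * b)

namespace IsMinimalDoubleCosetRep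

variable {cs} {I J : Set B} {d : W}

theorem inv (hd : cs.IsMinimalDoubleCosetRep J I d) : cs.IsMinimalDoubleCosetRep I J d⁻¹ := by
  intro a ha b hb
  rw [← cs.length_inv (a * d⁻¹ * b), cs.length_inv]
  simpa [mul_assoc] using hd b⁻¹ (inv_mem hb) a⁻¹ (inv_mem ha)

theorem length_mul (hd : cs.IsMinimalDoubleCosetRep J I d) {b : W} (hb : b ∈ cs.parabolic I) :
    cs.length (d * b) = cs.length d + cs.length b :=
  cs.length_mul_of_minimal (fun b hb => by simpa using hd 1 (one_mem _) b hb) hb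

theorem length_mul_left (hd : cs.IsMinimalDoubleCosetRep J I d) {a : W}
    (ha : a ∈ cs.parabolic J) : cs.length (a * d) = cs.length a + cs.length d := by
  have := hd.inv.length_mul (inv_mem ha)
  rwa [← mul_inv_rev, cs.length_inv, cs.length_inv, cs.length_inv, add_comm] at this

theorem conj_simple_mem_simple_image (hd : cs.IsMinimalDoubleCosetRep J I d) {w : W}
    (hw : w ∈ cs.parabolic I) {i : B} (hi : i ∈ I)
    (h_up : cs.length (w * cs.simple i) = cs.length w + 1)
    (h_conj : d * (w * cs.simple i) * d⁻¹ ∈ cs.parabolic J) :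
    d * cs.simple i * d⁻¹ ∈ cs.simple '' J := by
  set a := d * (w * cs.simple i) * d⁻¹
  have h_si := hd.length_mul (cs.simple_mem_parabolic hi)
  rw [cs.length_simple] at h_si
  have h_inv : cs.IsRightInversion (a * d) (cs.simple i) := by
    refine ⟨cs.isReflection_simple i, ?_⟩
    rw [show a * d * cs.simple i = d * w by simp [a, mul_assoc],
      show a * d = d * (w * cs.simple i) by simp [a], hd.length_mul hw,
      hd.length_mul (mul_mem hw (cs.simple_mem_parabolic hi))]
    omega
  -- the exchange cannot shorten `d` (it is minimal), so it shortens `a` inside `W_J`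
  have h_mem : d * cs.simple i * d⁻¹ ∈ cs.parabolic J := by
    rcases cs.exchange_mul h_conj (cs.parabolic_univ ▸ Subgroup.mem_top d) h_inv with
      ⟨x', hx', -, h_eq⟩ | ⟨y', -, hy'_lt, h_eq⟩
    · rw [show d * cs.simple i * d⁻¹ = a⁻¹ * x' by
        rw [← mul_inv_cancel_right x' d, ← h_eq]; group]
      exact mul_mem (inv_mem h_conj) hx'
    · rw [mul_assoc, mul_left_cancel_iff] at h_eq
      subst h_eq
      omega
  have h_len := hd.length_mul_left h_mem
  rw [inv_mul_cancel_right, h_si] at h_len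
  obtain ⟨j, hj, h_eq⟩ := cs.exists_simple_eq_of_mem_parabolic h_mem (by omega)
  exact ⟨j, hj, h_eq.symm⟩

theorem mem_parabolic_of_conj_mem (hd : cs.IsMinimalDoubleCosetRep J I d) {u : W}
    (hu : u ∈ cs.parabolic I) (h_conj : d * u * d⁻¹ ∈ cs.parabolic J) :
    u ∈ cs.parabolic {i ∈ I | d * cs.simple i * d⁻¹ ∈ cs.simple '' J} := by
  refine cs.parabolic_induction (P := fun u => d * u * d⁻¹ ∈ cs.parabolic J → u ∈ _)
    (fun _ => one_mem _) (fun w hw i hi h_up ih h_conj => ?_) hu h_conj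
  obtain ⟨j, hj, h_eq⟩ := hd.conj_simple_mem_simple_image hw hi h_up h_conj
  have hw_conj : d * w * d⁻¹ ∈ cs.parabolic J := by
    rw [show d * w * d⁻¹ = d * (w * cs.simple i) * d⁻¹ * (d * cs.simple i * d⁻¹)⁻¹ by group,
      ← h_eq]
    exact mul_mem h_conj (inv_mem (cs.simple_mem_parabolic hj))
  exact mul_mem (ih hw_conj) (cs.simple_mem_parabolic ⟨hi, j, hj, h_eq⟩)

end IsMinimalDoubleCosetRep

theorem parabolic_conj {I J : Set B} {d : W}
    (h : cs.simple '' J = (fun g => d * g * d⁻¹) '' (cs.simple '' I)) :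
    (cs.parabolic J : Set W) = (fun g => d * g * d⁻¹) '' cs.parabolic I := by
  have h_conj : (fun g => d * g * d⁻¹) = MulAut.conj d := rfl
  rw [parabolic, parabolic, h, h_conj, ← MonoidHom.coe_coe, ← MonoidHom.map_closure,
    Subgroup.coe_map]

end CoxeterSystem

section ConjClassIn

variable {W : Type*} [Group W] {H : Subgroup W} {w : W}

theorem mem_conjClassIn_self (H : Subgroup W) (w : W) : w ∈ conjClassIn H w :=
  ⟨1, one_mem H, by group⟩

theorem conjClassIn_subset (hw : w ∈ H) : conjClassIn H w ⊆ H := by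
  rintro _ ⟨y, hy, rfl⟩
  exact mul_mem (mul_mem hy hw) (inv_mem hy)

theorem conjClassIn_subset_conjugatesOf (H : Subgroup W) (w : W) :
    conjClassIn H w ⊆ conjugatesOf w := by
  rintro _ ⟨y, -, rfl⟩
  exact isConj_iff.mpr ⟨y, rfl⟩

theorem conj_mem_conjClassIn {x y : W} (hy : y ∈ H) (hx : x ∈ conjClassIn H w) :
    y * x * y⁻¹ ∈ conjClassIn H w := by
  obtain ⟨z, hz, rfl⟩ := hx
  exact ⟨y * z, mul_mem hy hz, by group⟩

theorem conjClassIn_eq_of_mem {u : W} (hu : u ∈ conjClassIn H w) :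
    conjClassIn H u = conjClassIn H w := by
  obtain ⟨z, hz, rfl⟩ := hu
  refine Set.Subset.antisymm (fun x hx => ?_) (fun x hx => ?_)
  · obtain ⟨y, hy, rfl⟩ := hx
    exact ⟨y * z, mul_mem hy hz, by group⟩
  · obtain ⟨y, hy, rfl⟩ := hx
    exact ⟨y * z⁻¹, mul_mem hy (inv_mem hz), by group⟩

theorem conjClassIn_conj {H' : Subgroup W} {d : W}
    (h : (H' : Set W) = (fun g => d * g * d⁻¹) '' H) (w : W) :
    conjClassIn H' (d * w * d⁻¹) = (fun g => d * g * d⁻¹) '' conjClassIn H w := by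
  ext x
  constructor
  · rintro ⟨y, hy, rfl⟩
    obtain ⟨z, hz, rfl⟩ := h ▸ (show y ∈ (H' : Set W) from hy)
    exact ⟨z * w * z⁻¹, ⟨z, hz, rfl⟩, by group⟩
  · rintro ⟨_, ⟨z, hz, rfl⟩, rfl⟩
    refine ⟨d * z * d⁻¹, ?_, by group⟩
    rw [← SetLike.mem_coe, h]
    exact ⟨z, hz, rfl⟩

end ConjClassIn

namespace CoxeterSystem

variable {B W : Type*} [Group W] {M : CoxeterMatrix B} {cs : CoxeterSystem M W}

namespace IsCuspidalPair

variable {I : Set B} {C : Set W}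

theorem eq_conjClassIn (hp : cs.IsCuspidalPair I C) {u : W} (hu : u ∈ C) :
    C = conjClassIn (cs.parabolic I) u := by
  obtain ⟨w, -, rfl⟩ := hp.1
  exact (conjClassIn_eq_of_mem hu).symm

theorem subset_parabolic (hp : cs.IsCuspidalPair I C) : C ⊆ cs.parabolic I := by
  obtain ⟨w, hw, rfl⟩ := hp.1
  exact conjClassIn_subset hw

theorem conj_mem (hp : cs.IsCuspidalPair I C) {u y : W} (hy : y ∈ cs.parabolic I)
    (hu : u ∈ C) : y * u * y⁻¹ ∈ C := by
  obtain ⟨w, -, rfl⟩ := hp.1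
  exact conj_mem_conjClassIn hy hu

theorem nonempty (hp : cs.IsCuspidalPair I C) : C.Nonempty := by
  obtain ⟨w, -, rfl⟩ := hp.1
  exact ⟨w, mem_conjClassIn_self _ w⟩

theorem iUnion_conjugatesOf (hp : cs.IsCuspidalPair I C) {u : W} (hu : u ∈ C) :
    ⋃ y ∈ C, conjugatesOf y = conjugatesOf u := by
  refine Set.Subset.antisymm (Set.iUnion₂_subset fun y hy => ?_) (Set.subset_biUnion_of_mem hu)
  rw [hp.eq_conjClassIn hu] at hy
  exact (conjClassIn_subset_conjugatesOf _ u hy).conjugatesOf_eq.symm.subset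

theorem conj_image_simple_subset (hp : cs.IsCuspidalPair I C) {u : W} (hu : u ∈ C) {J : Set B}
    {d : W} (hd : cs.IsMinimalDoubleCosetRep J I d) (h_conj : d * u * d⁻¹ ∈ cs.parabolic J) :
    (fun g => d * g * d⁻¹) '' (cs.simple '' I) ⊆ cs.simple '' J := by
  rintro _ ⟨_, ⟨i, hi, rfl⟩, rfl⟩
  by_contra h_not
  have h_ssub : {i ∈ I | d * cs.simple i * d⁻¹ ∈ cs.simple '' J} ⊂ I :=
    ⟨Set.sep_subset _ _, fun h => h_not (h hi).2⟩
  exact hp.2 _ h_ssub u hu (hd.mem_parabolic_of_conj_mem (hp.subset_parabolic hu) h_conj)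

end IsCuspidalPair

theorem pairEquiv_of_isConj {I₁ I₂ : Set B} {C₁ C₂ : Set W} (hp : cs.IsCuspidalPair I₁ C₁)
    (hq : cs.IsCuspidalPair I₂ C₂) {u v : W} (hu : u ∈ C₁) (hv : v ∈ C₂) (huv : IsConj u v) :
    cs.PairEquiv (I₁, C₁) (I₂, C₂) := by
  set X := {x : W | ∃ u ∈ C₁, x * u * x⁻¹ ∈ C₂}
  have hX : X.Nonempty := by
    obtain ⟨c, rfl⟩ := isConj_iff.mp huv
    exact ⟨c, u, hu, hv⟩
  obtain ⟨d, ⟨u₀, hu₀, hdu₀⟩, hd_min⟩ : ∃ d ∈ X, ∀ x ∈ X, cs.length d ≤ cs.length x :=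
    ⟨_, Function.argminOn_mem _ _ hX, fun x hx => Function.argminOn_le _ _ hx⟩
  have hd : cs.IsMinimalDoubleCosetRep I₂ I₁ d := by
    refine fun a ha b hb => hd_min _ ⟨b⁻¹ * u₀ * b, ?_, ?_⟩
    · simpa using hp.conj_mem (inv_mem hb) hu₀
    · simpa [mul_assoc] using hq.conj_mem ha hdu₀
  have h_le₁ := hp.conj_image_simple_subset hu₀ hd (hq.subset_parabolic hdu₀)
  have h_le₂ := hq.conj_image_simple_subset hdu₀ hd.inv
    (by simpa [mul_assoc] using hp.subset_parabolic hu₀)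
  have h_simple : cs.simple '' I₂ = (fun g => d * g * d⁻¹) '' (cs.simple '' I₁) := by
    refine Set.Subset.antisymm (fun x hx => ⟨d⁻¹ * x * d, ?_, by group⟩) h_le₁
    simpa using h_le₂ ⟨x, hx, rfl⟩
  refine ⟨d, h_simple, ?_⟩
  rw [hq.eq_conjClassIn hdu₀, hp.eq_conjClassIn hu₀]
  exact conjClassIn_conj (cs.parabolic_conj h_simple) u₀

variable (cs) in
theorem exists_isCuspidalPair_isConj (w : W) :
    ∃ I C, cs.IsCuspidalPair I C ∧ ∃ x ∈ C, IsConj w x := by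
  classical
  -- `K.Finite` matters: `Set.ncard` is `0` on infinite sets
  have h_exists : ∃ n, ∃ K : Set B, K.Finite ∧ K.ncard = n ∧
      ∃ x ∈ cs.parabolic K, IsConj w x := by
    obtain ⟨ω, rfl⟩ := cs.wordProd_surjective w
    exact ⟨_, {i | i ∈ ω}, ω.finite_toSet, rfl, _, cs.wordProd_mem_parabolic fun i hi => hi,
      IsConj.refl _⟩
  obtain ⟨K, hK_fin, hK_card, x, hx, hwx⟩ := Nat.find_spec h_exists
  refine ⟨K, conjClassIn (cs.parabolic K) x, ⟨⟨x, hx, rfl⟩, fun K' hK' y hy hyK' => ?_⟩, x,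
    mem_conjClassIn_self _ x, hwx⟩
  have h_min := Nat.find_min' h_exists ⟨K', hK_fin.subset hK'.subset, rfl, y, hyK',
    hwx.trans (conjClassIn_subset_conjugatesOf _ x hy)⟩
  have h_lt := Set.ncard_lt_ncard hK' hK_fin
  omega

def CuspPair.conjClass (p : cs.CuspPair) : {C : Set W // IsConjClassSet C} :=
  ⟨⋃ y ∈ p.1.2, conjugatesOf y, by
    obtain ⟨w, hw⟩ := p.2.nonempty
    exact ⟨w, p.2.iUnion_conjugatesOf hw⟩⟩

namespace CuspPair

theorem conjClass_eq (p : cs.CuspPair) {w : W} (hw : w ∈ p.1.2) :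
    (p.conjClass : Set W) = conjugatesOf w :=
  p.2.iUnion_conjugatesOf hw

theorem conjClass_eq_iff {p q : cs.CuspPair} :
    p.conjClass = q.conjClass ↔ cs.PairEquiv p.1 q.1 := by
  obtain ⟨w, hw⟩ := p.2.nonempty
  constructor
  · intro h
    obtain ⟨v, hv⟩ := q.2.nonempty
    have h_sets := congrArg Subtype.val h
    rw [p.conjClass_eq hw, q.conjClass_eq hv] at h_sets
    exact pairEquiv_of_isConj p.2 q.2 hw hv (isConj_iff_conjugatesOf_eq.mpr h_sets)
  · rintro ⟨x, -, h_image⟩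
    have hv : x * w * x⁻¹ ∈ q.1.2 := h_image ▸ Set.mem_image_of_mem _ hw
    refine Subtype.ext ?_
    rw [p.conjClass_eq hw, q.conjClass_eq hv]
    exact (isConj_iff.mpr ⟨x, rfl⟩).conjugatesOf_eq

theorem exists_conjClass_eq (C : {C : Set W // IsConjClassSet C}) :
    ∃ p : cs.CuspPair, p.conjClass = C := by
  obtain ⟨C, w, rfl⟩ := C
  obtain ⟨I, C', hp, x, hx, hwx⟩ := cs.exists_isCuspidalPair_isConj w
  exact ⟨⟨(I, C'), hp⟩, Subtype.ext ((conjClass_eq _ hx).trans hwx.conjugatesOf_eq.symm)⟩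

end CuspPair

variable (cs) in
def cuspQuotToConjClass :
    Quot (fun p q : cs.CuspPair => cs.PairEquiv p.1 q.1) → {C : Set W // IsConjClassSet C} :=
  Quot.lift CuspPair.conjClass fun _ _ h => CuspPair.conjClass_eq_iff.mpr h

variable (cs) in
theorem cuspQuotToConjClass_bijective :
    Function.Bijective cs.cuspQuotToConjClass := by
  refine ⟨fun x y => Quot.induction_on₂ x y fun p q h =>
    Quot.sound (CuspPair.conjClass_eq_iff.mp h), fun C => ?_⟩
  obtain ⟨p, hp⟩ := CuspPair.exists_conjClass_eq C
  exact ⟨Quot.mk _ p, hp⟩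

theorem cuspQuotToConjClass_mk (p : cs.CuspPair) {w : W} (hw : w ∈ p.1.2) :
    (cs.cuspQuotToConjClass (Quot.mk _ p) : Set W) = conjugatesOf w :=
  p.conjClass_eq hw

end CoxeterSystem

theorem conjClasses_biject_with_cuspidal_pairs_general {B W : Type*} [Group W]
    {M : CoxeterMatrix B} (cs : CoxeterSystem M W) :
    ∃ f : {C : Set W // IsConjClassSet C} →
        Quot (fun p q : cs.CuspPair => cs.PairEquiv p.1 q.1),
      Function.Bijective f ∧
      ∀ (C : {C : Set W // IsConjClassSet C}) (w : W), w ∈ cs.Cmin C.1 →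
        ∀ h : cs.IsCuspidalPair (cs.minPair w).1 (cs.minPair w).2,
          f C = Quot.mk _ ⟨cs.minPair w, h⟩ := by
  let e := Equiv.ofBijective _ cs.cuspQuotToConjClass_bijective
  refine ⟨e.symm, e.symm.bijective, fun C w hw h => ?_⟩
  rw [Equiv.symm_apply_eq]
  obtain ⟨C, w₀, rfl⟩ := C
  exact Subtype.ext (hw.1.conjugatesOf_eq.trans
    (cs.cuspQuotToConjClass_mk ⟨cs.minPair w, h⟩ (mem_conjClassIn_self _ w)).symm)

/-- The map sending a conjugacy class `C` of `W` to the `∼`-equivalence class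
of the pairs `(J(w), conjugacy class of w in W_{J(w)})`, `w ∈ C_min`, is a well-defined
bijection from the set of conjugacy classes of `W` onto `𝓘(W,S)/∼`. -/
theorem conjClasses_biject_with_cuspidal_pairs {B W : Type*} [Group W] [Finite W]
    {M : CoxeterMatrix B} (cs : CoxeterSystem M W) :
    ∃ f : {C : Set W // IsConjClassSet C} →
        Quot (fun p q : cs.CuspPair => cs.PairEquiv p.1 q.1),
      Function.Bijective f ∧
      ∀ (C : {C : Set W // IsConjClassSet C}) (w : W), w ∈ cs.Cmin C.1 →
        ∀ h : cs.IsCuspidalPair (cs.minPair w).1 (cs.minPair w).2,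
          f C = Quot.mk _ ⟨cs.minPair w, h⟩ :=
  conjClasses_biject_with_cuspidal_pairs_general cs
end

section
/- Let (W,S) be a Coxeter system of type D_n and let α be a partition of n with an even number h of nonzero parts α₁ ≤ α₂ ≤ … ≤ α_h. Set m_i = α₁ + ⋯ + α_{i−1} (so m₁ = 0), b_i := b⁻(m_i, α_i), and w_α := b₁ b₂ ⋯ b_h. Then w_α = (b_{h−1} b_h)(b_{h−3} b_{h−2}) ⋯ (b₃ b₄)(b₁ b₂); in particular w_α⁻¹ = (b₁b₂)⁻¹ (b₃b₄)⁻¹ ⋯ (b_{h−1}b_h)⁻¹. -/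
/-- The simple reflection with natural-number index `k` (junk value `1` if `k ≥ n`).
In type `Dₙ` we label the generators so that index `0` is `u` and index `k` (`1 ≤ k ≤ n−1`)
is `s_k`. -/
def CoxeterSystem.gen {n : ℕ} {W : Type*} [Group W] {M : CoxeterMatrix (Fin n)}
    (cs : CoxeterSystem M W) (k : ℕ) : W :=
  if h : k < n then cs.simple ⟨k, h⟩ else 1

/-- The element `ŝ_i = s_i ⋯ s₂ u s₁ s₂ ⋯ s_i` of a Coxeter group of type `Dₙ`
(so `ŝ₀ = 1` and `ŝ₁ = u s₁`). -/
def CoxeterSystem.shatD {n : ℕ} {W : Type*} [Group W] {M : CoxeterMatrix (Fin n)}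
    (cs : CoxeterSystem M W) : ℕ → W
  | 0 => 1
  | 1 => cs.gen 0 * cs.gen 1
  | i + 2 => cs.gen (i + 2) * cs.shatD (i + 1) * cs.gen (i + 2)

/-- The "negative block" `b⁻(m,d) = ŝ_m s_{m+1} s_{m+2} ⋯ s_{m+d−1}` of length `d`
starting at `m`, in type `Dₙ`. -/
def CoxeterSystem.negBlockD {n : ℕ} {W : Type*} [Group W] {M : CoxeterMatrix (Fin n)}
    (cs : CoxeterSystem M W) (m d : ℕ) : W :=
  cs.shatD m * ((List.range (d - 1)).map fun k => cs.gen (m + 1 + k)).prod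

/-- `m_i = α₁ + ⋯ + α_{i−1}` (so `m₁ = 0`), for a sequence of parts `α` indexed by
`1, …, h`. -/
def partSum (α : ℕ → ℕ) (i : ℕ) : ℕ := ∑ j ∈ Finset.Ico 1 i, α j

/-! Write `ŝ_a` for `cs.shatD a`, `s_t` for `cs.gen t` and `m_i` for `partSum α i`.
The `ŝ_a` pairwise commute, `s_t` (`t ≥ 2`) commutes with `ŝ_a` unless `t ∈ {a, a + 1}`,
and `s₁` conjugates `ŝ_a` (`a ≥ 2`) to `ŝ_a ŝ₁`, so `s₁` commutes with every product
`ŝ_a ŝ_b` with `a, b ≥ 2`. Hence the pair `b_{2j+1} b_{2j+2}` equals `ŝ_a ŝ_b` times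
generators `s_t` with `t > a`, where `a = m_{2j+1} ≥ 2` and `b = m_{2j+2}`, while every
earlier pair is a word in the `ŝ_m` with `m < a` and the `s_t` with `1 ≤ t < a`. So the
pairs commute and their product may be reversed; the formula for `w_α⁻¹` is the inverse of
the reversed product. -/

section Involutions

variable {G : Type*} [Group G]

theorem commute_iff_mul_mul_eq_of_mul_self_eq_one {g x : G} (hg : g * g = 1) :
    Commute g x ↔ g * x * g = x := by
  constructor
  · intro h
    rw [h.eq, mul_assoc, hg, mul_one]
  · intro h
    calc g * x = g * x * g * g := by rw [mul_assoc (g * x), hg, mul_one]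
      _ = x * g := by rw [h]

theorem Commute.conj_of_mul_self_eq_one {g a b : G} (hg : g * g = 1) (h : Commute a b) :
    Commute (g * a * g) (g * b * g) := by
  simpa only [inv_eq_of_mul_eq_one_right hg] using h.conj g

theorem commute_conj_of_braid {p q x : G} (hpq : p * q * p = q * p * q) (hqx : Commute q x) :
    Commute p (q * (p * x * p) * q) :=
  calc p * (q * (p * x * p) * q)
      = p * q * p * x * p * q := by group
    _ = q * p * (q * x) * p * q := by rw [hpq]; group
    _ = q * p * (x * q) * p * q := by rw [hqx.eq]
    _ = q * p * x * (p * q * p) := by rw [hpq]; group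
    _ = q * (p * x * p) * q * p := by group

end Involutions

theorem partSum_succ (α : ℕ → ℕ) {i : ℕ} (hi : 1 ≤ i) :
    partSum α (i + 1) = partSum α i + α i :=
  Finset.sum_Ico_succ_top hi α

theorem partSum_mono (α : ℕ → ℕ) : Monotone (partSum α) := fun _ _ hij =>
  Finset.sum_le_sum_of_subset (Finset.Ico_subset_Ico le_rfl hij)

theorem partSum_add_one (α : ℕ → ℕ) (h : ℕ) :
    partSum α (h + 1) = ∑ i ∈ Finset.Icc 1 h, α i := by
  rw [partSum, Finset.Ico_add_one_right_eq_Icc]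

theorem sub_one_le_partSum {α : ℕ → ℕ} {i : ℕ} (hpos : ∀ j, 1 ≤ j → j < i → 1 ≤ α j) :
    i - 1 ≤ partSum α i := by
  have h := Finset.card_nsmul_le_sum (Finset.Ico 1 i) α 1 fun j hj =>
    hpos j (Finset.mem_Ico.1 hj).1 (Finset.mem_Ico.1 hj).2
  rwa [Nat.card_Ico, smul_eq_mul, mul_one] at h

theorem List.prod_map_range_two_mul {G : Type*} [Monoid G] (f : ℕ → G) (k : ℕ) :
    ((List.range (2 * k)).map f).prod =
      ((List.range k).map fun j => f (2 * j) * f (2 * j + 1)).prod := by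
  induction k with
  | zero => rfl
  | succ k ih =>
    rw [show 2 * (k + 1) = 2 * k + 1 + 1 by ring, List.range_succ, List.range_succ,
      List.range_succ]
    simp [ih]

theorem List.prod_map_range_two_mul_eq_prod_reverse {G : Type*} [Monoid G] (f : ℕ → G) (k : ℕ)
    (h : ∀ i j, i < j → j < k →
      Commute (f (2 * i) * f (2 * i + 1)) (f (2 * j) * f (2 * j + 1))) :
    ((List.range (2 * k)).map f).prod =
      ((List.range k).reverse.map fun j => f (2 * j) * f (2 * j + 1)).prod := by
  rw [List.prod_map_range_two_mul, List.map_reverse]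
  refine (List.reverse_perm _).symm.prod_eq' ?_
  rw [List.pairwise_map]
  exact List.pairwise_lt_range.imp_of_mem fun _ hj hij => h _ _ hij (List.mem_range.1 hj)

namespace CoxeterSystem

section General

variable {B W : Type*} [Group W] {M : CoxeterMatrix B} (cs : CoxeterSystem M W)

theorem commute_simple_of_eq_two {i j : B} (h : M i j = 2) :
    Commute (cs.simple i) (cs.simple j) := by
  have h₂ := cs.simple_mul_simple_pow i j
  rw [h, sq] at h₂
  rw [Commute, SemiconjBy, eq_inv_of_mul_eq_one_left h₂, mul_inv_rev, inv_simple, inv_simple]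

theorem simple_braid_of_eq_three {i j : B} (h : M i j = 3) :
    cs.simple i * cs.simple j * cs.simple i = cs.simple j * cs.simple i * cs.simple j := by
  have h₃ := cs.wordProd_braidWord_eq i j
  rw [braidWord, braidWord, M.symmetric j i, h] at h₃
  simpa [alternatingWord, wordProd, ← mul_assoc, eq_comm] using h₃

end General

variable {n : ℕ} {W : Type*} [Group W] {M : CoxeterMatrix (Fin n)}

section Generators

variable (cs : CoxeterSystem M W)

theorem gen_of_lt {k : ℕ} (hk : k < n) : cs.gen k = cs.simple ⟨k, hk⟩ := dif_pos hk

theorem gen_of_le {k : ℕ} (hk : n ≤ k) : cs.gen k = 1 := dif_neg (by omega)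

theorem gen_mul_gen_self (k : ℕ) : cs.gen k * cs.gen k = 1 := by
  rcases lt_or_ge k n with hk | hk
  · rw [cs.gen_of_lt hk, simple_mul_simple_self]
  · rw [cs.gen_of_le hk, one_mul]

theorem gen_inv (k : ℕ) : (cs.gen k)⁻¹ = cs.gen k :=
  inv_eq_of_mul_eq_one_right (cs.gen_mul_gen_self k)

theorem commute_gen_of_eq_two {i j : ℕ} (hi : i < n) (hj : j < n)
    (h : M ⟨i, hi⟩ ⟨j, hj⟩ = 2) :
    Commute (cs.gen i) (cs.gen j) := by
  rw [cs.gen_of_lt hi, cs.gen_of_lt hj]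
  exact cs.commute_simple_of_eq_two h

theorem gen_braid_of_eq_three {i j : ℕ} (hi : i < n) (hj : j < n)
    (h : M ⟨i, hi⟩ ⟨j, hj⟩ = 3) :
    cs.gen i * cs.gen j * cs.gen i = cs.gen j * cs.gen i * cs.gen j := by
  rw [cs.gen_of_lt hi, cs.gen_of_lt hj]
  exact cs.simple_braid_of_eq_three h

/-- The commutation relations are stated for all indices, which is harmless since
`cs.gen k = 1` for `k ≥ n`. -/
structure TypeDRelations : Prop where
  commute_of_add_two_le : ∀ i j, 1 ≤ i → i + 2 ≤ j → Commute (cs.gen i) (cs.gen j)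
  commute_zero : ∀ j, j ≠ 2 → Commute (cs.gen 0) (cs.gen j)
  braid_succ : ∀ i, 1 ≤ i → i + 2 ≤ n →
    cs.gen i * cs.gen (i + 1) * cs.gen i = cs.gen (i + 1) * cs.gen i * cs.gen (i + 1)
  braid_zero_two : cs.gen 0 * cs.gen 2 * cs.gen 0 = cs.gen 2 * cs.gen 0 * cs.gen 2

theorem typeDRelations_of_coxeterMatrix (hn : 3 ≤ n)
    (hMu2 : ∀ h2 : 2 < n, M ⟨0, Nat.zero_lt_of_lt h2⟩ ⟨2, h2⟩ = 3)
    (hMu1 : ∀ h1 : 1 < n, M ⟨0, Nat.zero_lt_of_lt h1⟩ ⟨1, h1⟩ = 2)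
    (hM3 : ∀ (j : ℕ) (h : j + 2 < n), M ⟨j + 1, Nat.lt_of_succ_lt h⟩ ⟨j + 2, h⟩ = 3)
    (hMu : ∀ j : Fin n, 3 ≤ (j : ℕ) → M ⟨0, j.pos⟩ j = 2)
    (hM2 : ∀ i j : Fin n, 1 ≤ (i : ℕ) → (i : ℕ) + 1 < (j : ℕ) → M i j = 2) :
    cs.TypeDRelations where
  commute_of_add_two_le i j hi hij := by
    rcases lt_or_ge j n with hj | hj
    · exact cs.commute_gen_of_eq_two (by omega) hj (hM2 ⟨i, _⟩ ⟨j, hj⟩ hi hij)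
    · rw [cs.gen_of_le hj]
      exact Commute.one_right _
  commute_zero j hj := by
    rcases lt_or_ge j n with hjn | hjn
    · match j, hj with
      | 0, _ => exact Commute.refl _
      | 1, _ => exact cs.commute_gen_of_eq_two (by omega) hjn (hMu1 hjn)
      | j + 3, _ => exact cs.commute_gen_of_eq_two (by omega) hjn (hMu ⟨j + 3, hjn⟩ (by simp))
    · rw [cs.gen_of_le hjn]
      exact Commute.one_right _
  braid_succ i hi hin := by
    obtain ⟨j, rfl⟩ : ∃ j, i = j + 1 := ⟨i - 1, by omega⟩
    exact cs.gen_braid_of_eq_three (by omega) (by omega) (hM3 j (by omega))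
  braid_zero_two := cs.gen_braid_of_eq_three (by omega) (by omega) (hMu2 (by omega))

end Generators

variable {cs : CoxeterSystem M W}

theorem shatD_succ {a : ℕ} (ha : 1 ≤ a) :
    cs.shatD (a + 1) = cs.gen (a + 1) * cs.shatD a * cs.gen (a + 1) := by
  obtain ⟨b, rfl⟩ : ∃ b, a = b + 1 := ⟨a - 1, by omega⟩
  rfl

theorem commute_prod_gen_range {x : W} {m d : ℕ}
    (h : ∀ t, m < t → t < m + d → Commute x (cs.gen t)) :
    Commute x ((List.range (d - 1)).map fun k => cs.gen (m + 1 + k)).prod := by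
  refine Commute.list_prod_right _ _ ?_
  simp only [List.mem_map, List.mem_range]
  rintro _ ⟨k, hk, rfl⟩
  exact h _ (by omega) (by omega)

namespace TypeDRelations

theorem shatD_inv (hD : cs.TypeDRelations) (a : ℕ) : (cs.shatD a)⁻¹ = cs.shatD a := by
  induction a with
  | zero => exact inv_one
  | succ a ih =>
    rcases Nat.eq_zero_or_pos a with rfl | ha
    · rw [shatD, mul_inv_rev, gen_inv, gen_inv]
      exact (hD.commute_zero 1 (by decide)).eq.symm
    · rw [shatD_succ ha, mul_inv_rev, mul_inv_rev, gen_inv, ih, mul_assoc]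

theorem commute_gen_shatD_of_add_two_le (hD : cs.TypeDRelations) {a j : ℕ} (hj : a + 2 ≤ j) :
    Commute (cs.gen j) (cs.shatD a) := by
  induction a with
  | zero => exact Commute.one_right _
  | succ a ih =>
    rcases Nat.eq_zero_or_pos a with rfl | ha
    · exact ((hD.commute_zero j (by omega)).symm).mul_right
        (hD.commute_of_add_two_le 1 j le_rfl hj).symm
    · have hg := (hD.commute_of_add_two_le (a + 1) j (by omega) hj).symm
      rw [shatD_succ ha]
      exact (hg.mul_right (ih (by omega))).mul_right hg

theorem commute_gen_shatD_of_lt (hD : cs.TypeDRelations) {a j : ℕ} (hj : 2 ≤ j) (hja : j < a)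
    (ha : a < n) :
    Commute (cs.gen j) (cs.shatD a) := by
  induction a, hja using Nat.le_induction with
  | base =>
    obtain ⟨i, rfl⟩ : ∃ i, j = i + 2 := ⟨j - 2, by omega⟩
    rw [shatD_succ (by omega), shatD_succ (by omega)]
    exact commute_conj_of_braid (hD.braid_succ (i + 2) (by omega) (by omega))
      (hD.commute_gen_shatD_of_add_two_le le_rfl)
  | succ a hja ih =>
    have hg := hD.commute_of_add_two_le j (a + 1) (by omega) (by omega)
    rw [shatD_succ (by omega)]
    exact (hg.mul_right (ih (by omega))).mul_right hg

theorem shatD_one_mul_shatD_two (hD : cs.TypeDRelations) (hn : 3 ≤ n) :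
    cs.shatD 1 * cs.shatD 2 = cs.gen 1 * cs.shatD 2 * cs.gen 1 := by
  have hus := (hD.commute_zero 1 (by decide)).eq
  have hut := hD.braid_zero_two
  have hst := hD.braid_succ 1 le_rfl hn
  simp only [shatD]
  calc cs.gen 0 * cs.gen 1 * (cs.gen 2 * (cs.gen 0 * cs.gen 1) * cs.gen 2)
      = cs.gen 1 * (cs.gen 0 * cs.gen 2 * cs.gen 0) * cs.gen 1 * cs.gen 2 := by
        nth_rw 1 [hus]; group
    _ = cs.gen 1 * cs.gen 2 * cs.gen 0 * (cs.gen 2 * cs.gen 1 * cs.gen 2) := by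
        rw [hut]; group
    _ = cs.gen 1 * (cs.gen 2 * (cs.gen 0 * cs.gen 1) * cs.gen 2) * cs.gen 1 := by
        rw [← hst]; group

theorem gen_one_conj_shatD (hD : cs.TypeDRelations) {a : ℕ} (ha : 2 ≤ a) (han : a < n) :
    cs.gen 1 * cs.shatD a * cs.gen 1 = cs.shatD a * cs.shatD 1 := by
  induction a, ha using Nat.le_induction with
  | base =>
    calc cs.gen 1 * cs.shatD 2 * cs.gen 1
        = (cs.gen 1 * cs.shatD 2 * cs.gen 1)⁻¹ := by
          rw [mul_inv_rev, mul_inv_rev, gen_inv, hD.shatD_inv, mul_assoc]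
      _ = cs.shatD 2 * cs.shatD 1 := by
          rw [← hD.shatD_one_mul_shatD_two (by omega), mul_inv_rev, hD.shatD_inv, hD.shatD_inv]
  | succ a ha ih =>
    have h1 := hD.commute_of_add_two_le 1 (a + 1) le_rfl (by omega)
    have h2 := hD.commute_gen_shatD_of_add_two_le (a := 1) (j := a + 1) (by omega)
    rw [shatD_succ (by omega)]
    calc cs.gen 1 * (cs.gen (a + 1) * cs.shatD a * cs.gen (a + 1)) * cs.gen 1
        = (cs.gen 1 * cs.gen (a + 1)) * cs.shatD a * (cs.gen (a + 1) * cs.gen 1) := by group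
      _ = (cs.gen (a + 1) * cs.gen 1) * cs.shatD a * (cs.gen 1 * cs.gen (a + 1)) := by
          rw [h1.eq]
      _ = cs.gen (a + 1) * (cs.gen 1 * cs.shatD a * cs.gen 1) * cs.gen (a + 1) := by group
      _ = cs.gen (a + 1) * cs.shatD a * cs.gen (a + 1) * cs.shatD 1 := by
          rw [ih (by omega)]; simp only [mul_assoc, h2.eq]

theorem commute_shatD_shatD_succ (hD : cs.TypeDRelations) {a : ℕ} (han : a + 1 < n) :
    Commute (cs.shatD a) (cs.shatD (a + 1)) := by
  rcases Nat.eq_zero_or_pos a with rfl | ha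
  · exact Commute.one_left _
  induction a, ha using Nat.le_induction with
  | base =>
    exact (hD.shatD_one_mul_shatD_two (by omega)).trans (hD.gen_one_conj_shatD le_rfl (by omega))
  | succ a ha ih =>
    have hqX : Commute (cs.gen (a + 2)) (cs.shatD a) :=
      hD.commute_gen_shatD_of_add_two_le le_rfl
    have hXZ : Commute (cs.shatD a) (cs.shatD (a + 2)) := by
      have h := (ih (by omega)).conj_of_mul_self_eq_one (cs.gen_mul_gen_self (a + 2))
      rwa [(commute_iff_mul_mul_eq_of_mul_self_eq_one (cs.gen_mul_gen_self _)).1 hqX,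
        ← shatD_succ (by omega)] at h
    have hpZ : Commute (cs.gen (a + 1)) (cs.shatD (a + 2)) := by
      rw [shatD_succ (by omega), shatD_succ ha]
      exact commute_conj_of_braid (hD.braid_succ (a + 1) (by omega) (by omega)) hqX
    have h := hXZ.conj_of_mul_self_eq_one (cs.gen_mul_gen_self (a + 1))
    rwa [(commute_iff_mul_mul_eq_of_mul_self_eq_one (cs.gen_mul_gen_self _)).1 hpZ,
      ← shatD_succ ha] at h

theorem commute_shatD_shatD (hD : cs.TypeDRelations) {a b : ℕ} (han : a < n) (hbn : b < n) :
    Commute (cs.shatD a) (cs.shatD b) := by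
  wlog hab : a ≤ b generalizing a b
  · exact (this hbn han (by omega)).symm
  induction b, hab using Nat.le_induction with
  | base => exact Commute.refl _
  | succ b hab ih =>
    rcases hab.eq_or_lt with rfl | hab
    · exact hD.commute_shatD_shatD_succ hbn
    · have hg := (hD.commute_gen_shatD_of_add_two_le (a := a) (j := b + 1) (by omega)).symm
      rw [shatD_succ (by omega)]
      exact (hg.mul_right (ih (by omega))).mul_right hg

theorem commute_gen_one_shatD_mul_shatD (hD : cs.TypeDRelations) {a b : ℕ} (ha : 2 ≤ a)
    (hb : 2 ≤ b) (han : a < n) (hbn : b < n) :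
    Commute (cs.gen 1) (cs.shatD a * cs.shatD b) := by
  have h11 : cs.shatD 1 * cs.shatD 1 = 1 := mul_eq_one_iff_eq_inv.2 (hD.shatD_inv 1).symm
  rw [commute_iff_mul_mul_eq_of_mul_self_eq_one (cs.gen_mul_gen_self 1)]
  calc cs.gen 1 * (cs.shatD a * cs.shatD b) * cs.gen 1
      = (cs.gen 1 * cs.shatD a * cs.gen 1) * (cs.gen 1 * cs.shatD b * cs.gen 1) := by
        simp only [mul_assoc]
        rw [← mul_assoc (cs.gen 1) (cs.gen 1), gen_mul_gen_self, one_mul]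
    _ = cs.shatD a * (cs.shatD 1 * cs.shatD b) * cs.shatD 1 := by
        rw [hD.gen_one_conj_shatD ha han, hD.gen_one_conj_shatD hb hbn]; group
    _ = cs.shatD a * cs.shatD b := by
        rw [(hD.commute_shatD_shatD (by omega) hbn).eq, mul_assoc, mul_assoc, h11, mul_one]

theorem commute_negBlockD_gen (hD : cs.TypeDRelations) {m d t : ℕ} (hm : m + 2 ≤ t)
    (hmd : m + d + 1 ≤ t) :
    Commute (cs.negBlockD m d) (cs.gen t) :=
  Commute.mul_left (hD.commute_gen_shatD_of_add_two_le hm).symm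
    (commute_prod_gen_range fun s hs _ =>
      (hD.commute_of_add_two_le s t (by omega) (by omega)).symm).symm

theorem negBlockD_mul_negBlockD (hD : cs.TypeDRelations) {a d e : ℕ} (ha : 1 ≤ a)
    (han : a + d < n) :
    cs.negBlockD a d * cs.negBlockD (a + d) e =
      cs.shatD a * cs.shatD (a + d) *
        (((List.range (d - 1)).map fun k => cs.gen (a + 1 + k)).prod *
          ((List.range (e - 1)).map fun k => cs.gen (a + d + 1 + k)).prod) := by
  have hc := (commute_prod_gen_range (x := cs.shatD (a + d)) (m := a) (d := d) fun t hat htd =>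
    (hD.commute_gen_shatD_of_lt (by omega) htd han).symm).symm
  rw [negBlockD, negBlockD, mul_assoc, ← mul_assoc _ (cs.shatD (a + d)), hc.eq]
  group

theorem commute_negBlockD_shatD_mul_shatD (hD : cs.TypeDRelations) {m d a b : ℕ}
    (hmd : m + d ≤ a) (ha : 2 ≤ a) (hab : a ≤ b) (hbn : b < n) :
    Commute (cs.negBlockD m d) (cs.shatD a * cs.shatD b) := by
  refine Commute.mul_left ((hD.commute_shatD_shatD (by omega) (by omega)).mul_right
    (hD.commute_shatD_shatD (by omega) hbn)) (commute_prod_gen_range fun t hmt htd => ?_).symm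
  rcases (show 1 ≤ t by omega).eq_or_lt with rfl | ht
  · exact (hD.commute_gen_one_shatD_mul_shatD ha (by omega) (by omega) hbn).symm
  · exact ((hD.commute_gen_shatD_of_lt ht (by omega) (by omega)).mul_right
      (hD.commute_gen_shatD_of_lt ht (by omega) hbn)).symm

theorem commute_negBlockD_pair (hD : cs.TypeDRelations) {m d d' a e e' : ℕ} (hd' : 1 ≤ d')
    (hma : m + d + d' ≤ a) (ha : 2 ≤ a) (han : a + e < n) :
    Commute (cs.negBlockD m d * cs.negBlockD (m + d) d')
      (cs.negBlockD a e * cs.negBlockD (a + e) e') := by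
  rw [hD.negBlockD_mul_negBlockD (by omega) han]
  refine Commute.mul_left ?_ ?_ <;>
  · refine (hD.commute_negBlockD_shatD_mul_shatD (by omega) ha (by omega) han).mul_right
      ((commute_prod_gen_range fun t ht _ => ?_).mul_right
        (commute_prod_gen_range fun t ht _ => ?_)) <;>
    exact hD.commute_negBlockD_gen (by omega) (by omega)

theorem commute_negBlockD_pairs (hD : cs.TypeDRelations) {α : ℕ → ℕ} {k i j : ℕ}
    (hpos : ∀ i, 1 ≤ i → i ≤ 2 * k → 1 ≤ α i) (hsum : ∑ i ∈ Finset.Icc 1 (2 * k), α i = n)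
    (hij : i < j) (hjk : j < k) :
    Commute
      (cs.negBlockD (partSum α (2 * i + 1)) (α (2 * i + 1)) *
        cs.negBlockD (partSum α (2 * i + 2)) (α (2 * i + 2)))
      (cs.negBlockD (partSum α (2 * j + 1)) (α (2 * j + 1)) *
        cs.negBlockD (partSum α (2 * j + 2)) (α (2 * j + 2))) := by
  have h₁ : partSum α (2 * i + 2) = partSum α (2 * i + 1) + α (2 * i + 1) :=
    partSum_succ α (i := 2 * i + 1) (by omega)
  have h₂ : partSum α (2 * i + 3) = partSum α (2 * i + 2) + α (2 * i + 2) :=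
    partSum_succ α (i := 2 * i + 2) (by omega)
  have h₃ : partSum α (2 * j + 2) = partSum α (2 * j + 1) + α (2 * j + 1) :=
    partSum_succ α (i := 2 * j + 1) (by omega)
  have h₄ : partSum α (2 * j + 3) = partSum α (2 * j + 2) + α (2 * j + 2) :=
    partSum_succ α (i := 2 * j + 2) (by omega)
  have hlow := sub_one_le_partSum (α := α) (i := 2 * j + 1) fun l hl hlj => hpos l hl (by omega)
  have hmid := partSum_mono α (show 2 * i + 3 ≤ 2 * j + 1 by omega)
  have htop := partSum_mono α (show 2 * j + 3 ≤ 2 * k + 1 by omega)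
  rw [partSum_add_one α (2 * k), hsum] at htop
  have hpos₄ := hpos (2 * j + 2) (by omega) (by omega)
  rw [h₁, h₃]
  exact hD.commute_negBlockD_pair (hpos (2 * i + 2) (by omega) (by omega)) (by omega) (by omega)
    (by omega)

end TypeDRelations

end CoxeterSystem

/-- Let `(W,S)` be of type `Dₙ` and let `α` be a partition of `n` with an
even number `h = 2k` of nonzero parts `α₁ ≤ … ≤ α_h`.  With `b_i = b⁻(m_i, α_i)` and
`w_α = b₁ b₂ ⋯ b_h`, one has `w_α = (b_{h−1} b_h)(b_{h−3} b_{h−2}) ⋯ (b₃ b₄)(b₁ b₂)`;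
in particular `w_α⁻¹ = (b₁ b₂)⁻¹ (b₃ b₄)⁻¹ ⋯ (b_{h−1} b_h)⁻¹`. -/
theorem walphaD_block_commutation {n : ℕ} {W : Type*} [Group W] (hn : 4 ≤ n)
    {M : CoxeterMatrix (Fin n)}
    (hMu2 : ∀ h2 : 2 < n, M ⟨0, by omega⟩ ⟨2, h2⟩ = 3)
    (hMu1 : ∀ h1 : 1 < n, M ⟨0, by omega⟩ ⟨1, h1⟩ = 2)
    (hM3 : ∀ (j : ℕ) (h : j + 2 < n), M ⟨j + 1, by omega⟩ ⟨j + 2, h⟩ = 3)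
    (hMu : ∀ j : Fin n, 3 ≤ (j : ℕ) → M ⟨0, by omega⟩ j = 2)
    (hM2 : ∀ i j : Fin n, 1 ≤ (i : ℕ) → (i : ℕ) + 1 < (j : ℕ) → M i j = 2)
    (cs : CoxeterSystem M W) (h k : ℕ) (hhk : h = 2 * k) (α : ℕ → ℕ)
    (hpos : ∀ i, 1 ≤ i → i ≤ h → 1 ≤ α i)
    (hsum : ∑ i ∈ Finset.Icc 1 h, α i = n) :
    ((List.range h).map fun i => cs.negBlockD (partSum α (i + 1)) (α (i + 1))).prod =
      ((List.range k).reverse.map fun j =>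
        cs.negBlockD (partSum α (2 * j + 1)) (α (2 * j + 1)) *
        cs.negBlockD (partSum α (2 * j + 2)) (α (2 * j + 2))).prod ∧
    (((List.range h).map fun i => cs.negBlockD (partSum α (i + 1)) (α (i + 1))).prod)⁻¹ =
      ((List.range k).map fun j =>
        (cs.negBlockD (partSum α (2 * j + 1)) (α (2 * j + 1)) *
         cs.negBlockD (partSum α (2 * j + 2)) (α (2 * j + 2)))⁻¹).prod := by
  subst hhk
  have hD := cs.typeDRelations_of_coxeterMatrix (by omega) hMu2 hMu1 hM3 hMu hM2
  have hrev := List.prod_map_range_two_mul_eq_prod_reverse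
    (fun i => cs.negBlockD (partSum α (i + 1)) (α (i + 1))) k
    fun i j hij hjk => hD.commute_negBlockD_pairs hpos hsum hij hjk
  refine ⟨hrev, ?_⟩
  rw [hrev, List.prod_inv_reverse, List.map_reverse, List.map_reverse, List.reverse_reverse,
    List.map_map]
  rfl
end
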